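/- arXiv:2404.08599 — 2 statements merged into one kernel-verified Lean document; each statement's English description precedes it below -/
import Mathlib

section
/- Let G* be a densest subgraph of G. Then every vertex of G* has degree (within G*) at least ⌈ρ(G*)⌉. -/
open SimpleGraph

noncomputable def subgraphDensity {V : Type*} {G : SimpleGraph V} (H : G.Subgraph) : ℚ :=
  (H.edgeSet.ncard : ℚ) / (H.verts.ncard : ℚ)

def IsDensest {V : Type*} {G : SimpleGraph V} (H : G.Subgraph) : Prop :=
  H.verts.Nonempty ∧ ∀ H' : G.Subgraph, H'.verts.Nonempty → subgraphDensity H' ≤ subgraphDensity H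

/-!
Deleting a vertex `v` from a densest subgraph `H` (with `n` vertices and `m` edges) loses at most
`deg v` edges and cannot increase the density, so `(m - deg v) / (n - 1) ≤ m / n`, i.e.
`m / n ≤ deg v`. As `deg v` is an integer, this bounds the ceiling of the density as well.
-/

namespace SimpleGraph.Subgraph

variable {V : Type*} {G : SimpleGraph V}

theorem edgeSet_subset_deleteVerts_union_image_neighborSet (H : G.Subgraph) (v : V) :
    H.edgeSet ⊆ (H.deleteVerts {v}).edgeSet ∪ (fun u => s(v, u)) '' H.neighborSet v := by
  intro e he
  induction e using Sym2.ind with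
  | _ a b =>
    rw [Subgraph.mem_edgeSet] at he
    by_cases hav : a = v
    · subst hav
      exact Or.inr ⟨b, he, rfl⟩
    by_cases hbv : b = v
    · subst hbv
      exact Or.inr ⟨a, he.symm, Sym2.eq_swap⟩
    · left
      rw [Subgraph.mem_edgeSet, deleteVerts_adj]
      exact ⟨he.fst_mem, hav, he.snd_mem, hbv, he⟩

theorem ncard_edgeSet_le_deleteVerts_add_ncard_neighborSet [Finite V] (H : G.Subgraph) (v : V) :
    H.edgeSet.ncard ≤ (H.deleteVerts {v}).edgeSet.ncard + (H.neighborSet v).ncard :=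
  calc H.edgeSet.ncard
      ≤ ((H.deleteVerts {v}).edgeSet ∪ (fun u => s(v, u)) '' H.neighborSet v).ncard :=
        Set.ncard_le_ncard (edgeSet_subset_deleteVerts_union_image_neighborSet H v)
    _ ≤ (H.deleteVerts {v}).edgeSet.ncard + ((fun u => s(v, u)) '' H.neighborSet v).ncard :=
        Set.ncard_union_le _ _
    _ ≤ (H.deleteVerts {v}).edgeSet.ncard + (H.neighborSet v).ncard := by
        gcongr
        exact Set.ncard_image_le (Set.toFinite _)

theorem ncard_verts_deleteVerts_singleton_add_one [Finite V] {H : G.Subgraph} {v : V}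
    (hv : v ∈ H.verts) : (H.deleteVerts {v}).verts.ncard + 1 = H.verts.ncard := by
  rw [deleteVerts_verts]
  exact Set.ncard_sdiff_singleton_add_one hv (Set.toFinite _)

theorem edgeSet_eq_empty_of_verts_eq_empty {H : G.Subgraph} (h : H.verts = ∅) :
    H.edgeSet = ∅ := by
  rw [(eq_bot_iff_verts_eq_empty H).mpr h, edgeSet_bot]

end SimpleGraph.Subgraph

open SimpleGraph.Subgraph

section

variable {V : Type*} {G : SimpleGraph V}

theorem subgraphDensity_le_iff [Finite V] {H : G.Subgraph} (hH : H.verts.Nonempty) (d : ℚ) :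
    subgraphDensity H ≤ d ↔ (H.edgeSet.ncard : ℚ) ≤ d * H.verts.ncard := by
  rw [subgraphDensity, div_le_iff₀ (Nat.cast_pos.mpr (hH.ncard_pos (Set.toFinite _)))]

/-- Cleared of denominators, the comparison also holds for `H'` without vertices. -/
theorem IsDensest.ncard_edgeSet_mul_le [Finite V] {H : G.Subgraph} (hH : IsDensest H)
    (H' : G.Subgraph) :
    H'.edgeSet.ncard * H.verts.ncard ≤ H.edgeSet.ncard * H'.verts.ncard := by
  rcases H'.verts.eq_empty_or_nonempty with hempty | hne
  · simp [edgeSet_eq_empty_of_verts_eq_empty hempty]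
  · have h := hH.2 H' hne
    rw [subgraphDensity, subgraphDensity, div_le_div_iff₀
      (Nat.cast_pos.mpr (hne.ncard_pos (Set.toFinite _)))
      (Nat.cast_pos.mpr (hH.1.ncard_pos (Set.toFinite _)))] at h
    exact_mod_cast h

end

theorem stmt_4 {V : Type*} [Fintype V] (G : SimpleGraph V) (Hstar : G.Subgraph)
    (hdense : IsDensest Hstar) (v : V) (hv : v ∈ Hstar.verts) :
    ⌈subgraphDensity Hstar⌉ ≤ ((Hstar.neighborSet v).ncard : ℤ) := by
  have hedges := ncard_edgeSet_le_deleteVerts_add_ncard_neighborSet Hstar v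
  have hverts := ncard_verts_deleteVerts_singleton_add_one hv
  have hdens := hdense.ncard_edgeSet_mul_le (Hstar.deleteVerts {v})
  have hmn : Hstar.edgeSet.ncard ≤ (Hstar.neighborSet v).ncard * Hstar.verts.ncard := by
    rw [← hverts] at hdens ⊢
    nlinarith
  rw [Int.ceil_le, Int.cast_natCast, subgraphDensity_le_iff hdense.1]
  exact_mod_cast hmn
end

section
/- In a graph G with a vertex cover C, if two vertices u, v outside C have identical neighborhoods (N(u) = N(v) ⊆ C), then for any subgraph H containing u but not v, the graph obtained by adding v (with edges to N(v) ∩ V(H)) has density at least min(ρ(H), ρ of the added part), and consequently there exists a densest subgraph of G that, for each twin-class of the independent set, contains either all or none of its vertices. -/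
open SimpleGraph

/-!
Deleting a vertex `a` from a subgraph with `m` edges on `n + 1` vertices leaves `m - d` edges on
`n` vertices, where `d` is the degree of `a`, and the density `m / (n + 1)` is the mediant of
`(m - d) / n` and `d / 1`. Hence in a densest subgraph every vertex has degree at least the
density, and adding a vertex whose degree into the subgraph is `k` yields density at least
`min ρ k`. Among the densest subgraphs take one with the most vertices: if it contained `a` but
not its twin `b`, then `b` would have degree at least `ρ` into it, and adding `b` would produce a
larger densest subgraph.
-/

section Mediant

variable {K : Type*} [Field K] [LinearOrder K] [IsStrictOrderedRing K] {a b c d : K}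

theorem min_div_le_add_div_add (hb : 0 < b) (hd : 0 < d) :
    min (a / b) (c / d) ≤ (a + c) / (b + d) := by
  rcases le_total (a / b) (c / d) with h | h
  · rw [min_eq_left h, div_le_div_iff₀ hb (by positivity)]
    rw [div_le_div_iff₀ hb hd] at h
    nlinarith
  · rw [min_eq_right h, div_le_div_iff₀ hd (by positivity)]
    rw [div_le_div_iff₀ hd hb] at h
    nlinarith

theorem add_div_add_le_of_div_le (hb : 0 < b) (hd : 0 < d)
    (h : a / b ≤ (a + c) / (b + d)) : (a + c) / (b + d) ≤ c / d := by
  rw [div_le_div_iff₀ hb (by positivity)] at h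
  rw [div_le_div_iff₀ (by positivity) hd]
  nlinarith

end Mediant

namespace SimpleGraph.Subgraph

variable {V : Type*} {G : SimpleGraph V}

def insertVert (H : G.Subgraph) (v : V) : G.Subgraph where
  verts := insert v H.verts
  Adj x y := H.Adj x y ∨ (x = v ∧ y ∈ G.neighborSet v ∩ H.verts) ∨
    (y = v ∧ x ∈ G.neighborSet v ∩ H.verts)
  adj_sub := by
    rintro x y (h | ⟨rfl, hy⟩ | ⟨rfl, hx⟩)
    · exact H.adj_sub h
    · exact hy.1
    · exact hx.1.symm
  edge_vert := by
    rintro x y (h | ⟨rfl, -⟩ | ⟨-, hx⟩)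
    · exact Or.inr h.fst_mem
    · exact Or.inl rfl
    · exact Or.inr hx.2
  symm := ⟨fun x y => by
    rintro (h | h | h)
    exacts [Or.inl h.symm, Or.inr (Or.inr h), Or.inr (Or.inl h)]⟩

variable {H : G.Subgraph} {v : V}

@[simp]
theorem insertVert_verts : (H.insertVert v).verts = insert v H.verts := rfl

@[simp]
theorem insertVert_adj {x y : V} : (H.insertVert v).Adj x y ↔ H.Adj x y ∨
    (x = v ∧ y ∈ G.neighborSet v ∩ H.verts) ∨ (y = v ∧ x ∈ G.neighborSet v ∩ H.verts) :=
  Iff.rfl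

theorem deleteVerts_insertVert (hv : v ∉ H.verts) : (H.insertVert v).deleteVerts {v} = H := by
  ext x y
  · rw [deleteVerts_verts, insertVert_verts, Set.insert_sdiff_of_mem _ (Set.mem_singleton v),
      Set.sdiff_singleton_eq_self hv]
  · simp only [deleteVerts_adj, insertVert_verts, insertVert_adj, Set.mem_insert_iff,
      Set.mem_singleton_iff]
    constructor
    · rintro ⟨-, hxv, -, hyv, h | ⟨rfl, -⟩ | ⟨rfl, -⟩⟩
      exacts [h, absurd rfl hxv, absurd rfl hyv]
    · intro h
      have hxv : x ≠ v := fun hx => hv (hx ▸ h.fst_mem)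
      have hyv : y ≠ v := fun hy => hv (hy ▸ h.snd_mem)
      exact ⟨Or.inr h.fst_mem, hxv, Or.inr h.snd_mem, hyv, Or.inl h⟩

theorem neighborSet_insertVert_self (hv : v ∉ H.verts) :
    (H.insertVert v).neighborSet v = G.neighborSet v ∩ H.verts := by
  ext w
  simp only [mem_neighborSet, insertVert_adj, true_and]
  constructor
  · rintro (h | h | ⟨rfl, h⟩)
    exacts [absurd h.fst_mem hv, h, absurd h.2 hv]
  · exact fun h => Or.inr (Or.inl h)

theorem edgeSet_eq_deleteVerts_union_image (H : G.Subgraph) (a : V) :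
    H.edgeSet = (H.deleteVerts {a}).edgeSet ∪ (fun w => s(a, w)) '' H.neighborSet a := by
  ext e
  induction e using Sym2.ind with
  | _ x y =>
    simp only [Set.mem_union, Subgraph.mem_edgeSet, deleteVerts_adj, Set.mem_singleton_iff,
      Set.mem_image, mem_neighborSet, Sym2.eq_iff]
    constructor
    · intro h
      by_cases hx : x = a
      · exact Or.inr ⟨y, hx ▸ h, Or.inl ⟨hx.symm, rfl⟩⟩
      by_cases hy : y = a
      · exact Or.inr ⟨x, hy ▸ h.symm, Or.inr ⟨hy.symm, rfl⟩⟩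
      exact Or.inl ⟨h.fst_mem, hx, h.snd_mem, hy, h⟩
    · rintro (⟨-, -, -, -, h⟩ | ⟨w, h, ⟨rfl, rfl⟩ | ⟨rfl, rfl⟩⟩)
      exacts [h, h, h.symm]

theorem ncard_edgeSet_eq_add [Finite V] (H : G.Subgraph) (a : V) :
    H.edgeSet.ncard = (H.deleteVerts {a}).edgeSet.ncard + (H.neighborSet a).ncard := by
  have hdisj : Disjoint (H.deleteVerts {a}).edgeSet ((fun w => s(a, w)) '' H.neighborSet a) := by
    rw [Set.disjoint_right]
    rintro _ ⟨w, -, rfl⟩ he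
    exact ((deleteVerts_adj.mp (Subgraph.mem_edgeSet.mp he)).2.1 rfl)
  rw [edgeSet_eq_deleteVerts_union_image H a, Set.ncard_union_eq hdisj,
    Set.ncard_image_of_injective _ fun _ _ => Sym2.congr_right.mp]

end SimpleGraph.Subgraph

def IsDensestSubgraph {V : Type*} {G : SimpleGraph V} (H : G.Subgraph) : Prop :=
  H.verts.Nonempty ∧ ∀ H' : G.Subgraph, H'.verts.Nonempty → subgraphDensity H' ≤ subgraphDensity H

section Density

open SimpleGraph.Subgraph

variable {V : Type*} [Finite V] {G : SimpleGraph V}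

theorem subgraphDensity_eq_of_mem {H : G.Subgraph} {a : V} (ha : a ∈ H.verts) :
    subgraphDensity H = ((H.deleteVerts {a}).edgeSet.ncard + (H.neighborSet a).ncard : ℚ) /
      ((H.deleteVerts {a}).verts.ncard + 1 : ℚ) := by
  rw [subgraphDensity, ncard_edgeSet_eq_add H a, deleteVerts_verts,
    ← Set.ncard_sdiff_singleton_add_one ha]
  push_cast
  rfl

theorem min_subgraphDensity_le_insertVert {H : G.Subgraph} {v : V} (hH : H.verts.Nonempty)
    (hv : v ∉ H.verts) :
    min (subgraphDensity H) ((G.neighborSet v ∩ H.verts).ncard : ℚ) ≤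
      subgraphDensity (H.insertVert v) := by
  rw [subgraphDensity_eq_of_mem (H := H.insertVert v) (Set.mem_insert v H.verts),
    deleteVerts_insertVert hv, neighborSet_insertVert_self hv]
  have h := min_div_le_add_div_add (a := (H.edgeSet.ncard : ℚ))
    (c := ((G.neighborSet v ∩ H.verts).ncard : ℚ)) (Nat.cast_pos.mpr hH.ncard_pos) one_pos
  rwa [div_one] at h

theorem IsDensestSubgraph.subgraphDensity_le_ncard_neighborSet {H : G.Subgraph}
    (hH : IsDensestSubgraph H) {a : V} (ha : a ∈ H.verts) :
    subgraphDensity H ≤ (H.neighborSet a).ncard := by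
  set D := H.deleteVerts {a}
  rcases D.verts.eq_empty_or_nonempty with hD | hD
  · have hE : D.edgeSet = ∅ := Set.eq_empty_of_forall_notMem fun e he => by
      induction e using Sym2.ind with
      | _ x y => exact hD.subset (Subgraph.mem_edgeSet.mp he).fst_mem
    rw [subgraphDensity_eq_of_mem ha, hD, hE]
    simp
  · have hρ := subgraphDensity_eq_of_mem ha
    rw [hρ]
    have h := add_div_add_le_of_div_le (Nat.cast_pos.mpr hD.ncard_pos) one_pos (hρ ▸ hH.2 D hD)
    rwa [div_one] at h

theorem exists_isDensestSubgraph_forall_ncard_le [Nonempty V] (G : SimpleGraph V) :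
    ∃ H : G.Subgraph, IsDensestSubgraph H ∧
      ∀ H' : G.Subgraph, IsDensestSubgraph H' → H'.verts.ncard ≤ H.verts.ncard := by
  obtain ⟨H₀, hH₀, hmax₀⟩ := Set.exists_max_image {H : G.Subgraph | H.verts.Nonempty}
    subgraphDensity (Set.toFinite _) ⟨⊤, Set.univ_nonempty⟩
  obtain ⟨H, hH, hmax⟩ := Set.exists_max_image {H : G.Subgraph | IsDensestSubgraph H}
    (fun H => H.verts.ncard) (Set.toFinite _) ⟨H₀, hH₀, hmax₀⟩
  exact ⟨H, hH, hmax⟩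

theorem IsDensestSubgraph.insertVert_of_neighborSet_eq {H : G.Subgraph} (hH : IsDensestSubgraph H) {a b : V}
    (ha : a ∈ H.verts) (hb : b ∉ H.verts) (hab : G.neighborSet a = G.neighborSet b) :
    IsDensestSubgraph (H.insertVert b) := by
  have hdeg : H.neighborSet a ⊆ G.neighborSet b ∩ H.verts :=
    fun w hw => ⟨hab ▸ H.adj_sub hw, hw.snd_mem⟩
  have hρ : subgraphDensity H ≤ (G.neighborSet b ∩ H.verts).ncard :=
    (hH.subgraphDensity_le_ncard_neighborSet ha).trans (by exact_mod_cast Set.ncard_le_ncard hdeg)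
  have hle := min_subgraphDensity_le_insertVert hH.1 hb
  rw [min_eq_left hρ] at hle
  exact ⟨Set.insert_nonempty b H.verts, fun H' hH' => (hH.2 H' hH').trans hle⟩

theorem exists_isDensestSubgraph_mem_iff_of_neighborSet_eq [Nonempty V] (G : SimpleGraph V) :
    ∃ H : G.Subgraph, IsDensestSubgraph H ∧
      ∀ a b : V, G.neighborSet a = G.neighborSet b → (a ∈ H.verts ↔ b ∈ H.verts) := by
  obtain ⟨H, hH, hmax⟩ := exists_isDensestSubgraph_forall_ncard_le G
  have hclosed : ∀ a b : V, G.neighborSet a = G.neighborSet b → a ∈ H.verts → b ∈ H.verts := by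
    intro a b hab ha
    by_contra hb
    have hcard := hmax _ (hH.insertVert_of_neighborSet_eq ha hb hab)
    rw [insertVert_verts, Set.ncard_insert_of_notMem hb] at hcard
    omega
  exact ⟨H, hH, fun a b hab => ⟨hclosed a b hab, hclosed b a hab.symm⟩⟩

end Density

theorem stmt_17_general {V : Type*} [Fintype V] [Nonempty V] (G : SimpleGraph V) (C : Set V)
    (u v : V) :
    (∀ H H' : G.Subgraph, H.verts.Nonempty → u ∈ H.verts → v ∉ H.verts →
      H'.verts = insert v H.verts →
      (∀ a b : V, H'.Adj a b ↔ H.Adj a b ∨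
        (a = v ∧ b ∈ G.neighborSet v ∩ H.verts) ∨
        (b = v ∧ a ∈ G.neighborSet v ∩ H.verts)) →
      min (subgraphDensity H) ((G.neighborSet v ∩ H.verts).ncard : ℚ) ≤
        subgraphDensity H') ∧
    (∃ Hstar : G.Subgraph, Hstar.verts.Nonempty ∧
      (∀ H : G.Subgraph, H.verts.Nonempty → subgraphDensity H ≤ subgraphDensity Hstar) ∧
      ∀ a b : V, a ∉ C → b ∉ C → G.neighborSet a = G.neighborSet b →
        (a ∈ Hstar.verts ↔ b ∈ Hstar.verts)) := by
  refine ⟨fun H H' hH _ hv hverts hadj => ?_, ?_⟩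
  · obtain rfl : H' = H.insertVert v := Subgraph.ext (by rw [hverts, Subgraph.insertVert_verts])
      (by ext a b; rw [hadj, Subgraph.insertVert_adj])
    exact min_subgraphDensity_le_insertVert hH hv
  · obtain ⟨H, ⟨hH, hmax⟩, htwins⟩ := exists_isDensestSubgraph_mem_iff_of_neighborSet_eq G
    exact ⟨H, hH, hmax, fun a b _ _ => htwins a b⟩

theorem stmt_17 {V : Type*} [Fintype V] [Nonempty V] (G : SimpleGraph V) (C : Set V)
    (hC : ∀ e ∈ G.edgeSet, ∃ x ∈ C, x ∈ e)
    (u v : V) (hu : u ∉ C) (hv : v ∉ C) (huv : u ≠ v)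
    (htwin : G.neighborSet u = G.neighborSet v) :
    (∀ H H' : G.Subgraph, H.verts.Nonempty → u ∈ H.verts → v ∉ H.verts →
      H'.verts = insert v H.verts →
      (∀ a b : V, H'.Adj a b ↔ H.Adj a b ∨
        (a = v ∧ b ∈ G.neighborSet v ∩ H.verts) ∨
        (b = v ∧ a ∈ G.neighborSet v ∩ H.verts)) →
      min (subgraphDensity H) ((G.neighborSet v ∩ H.verts).ncard : ℚ) ≤
        subgraphDensity H') ∧
    (∃ Hstar : G.Subgraph, Hstar.verts.Nonempty ∧
      (∀ H : G.Subgraph, H.verts.Nonempty → subgraphDensity H ≤ subgraphDensity Hstar) ∧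
      ∀ a b : V, a ∉ C → b ∉ C → G.neighborSet a = G.neighborSet b →
        (a ∈ Hstar.verts ↔ b ∈ Hstar.verts)) :=
  stmt_17_general G C u v
end
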